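/- Let A be a real n×n matrix satisfying A_{ij}·A_{ji} = 0 for all i, j (in particular, A has zero diagonal and no pair of oppositely directed nonzero entries; any DAG adjacency matrix satisfies this). Let B = A + Aᵀ. Then ‖A‖₂ ≤ max_{1≤j≤n} Σ_{i=1}^n |B_{ij}|, where ‖·‖₂ denotes the spectral norm. -/

import Mathlib

/-!
Since `A i j * A j i = 0`, one of the summands of `(A + Aᵀ) i j = A i j + A j i` vanishes, so
`|A i j|` is bounded both by `|(A + Aᵀ) i j|` and by `|(A + Aᵀ) j i|`. Hence every row sum and
every column sum of `|A|` is at most the largest column sum `C` of `|A + Aᵀ|`, and the Schur test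
`‖M‖₂ ≤ √(r c)`, for bounds `r`, `c` on the absolute row and column sums of `M`, gives `‖A‖₂ ≤ C`.
-/

open Matrix

/-- The spectral norm (ℓ²→ℓ² operator norm) of a real matrix. -/
noncomputable def matrixSpectralNorm {m n : Type*} [Fintype m] [Fintype n] [DecidableEq n]
    (M : Matrix m n ℝ) : ℝ :=
  ‖LinearMap.toContinuousLinearMap (Matrix.toEuclideanLin M)‖

open Finset

theorem abs_le_abs_add_of_mul_eq_zero {R : Type*} [Ring R] [LinearOrder R] [IsStrictOrderedRing R]
    {a b : R} (h : a * b = 0) : |a| ≤ |a + b| := by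
  rcases mul_eq_zero.mp h with rfl | rfl <;> simp

namespace Matrix

variable {m n R : Type*} [Fintype n]

/-- Cauchy–Schwarz with weights `|M i j|`. -/
theorem sq_mulVec_le [CommRing R] [LinearOrder R] [IsStrictOrderedRing R]
    (M : Matrix m n R) (x : n → R) (i : m) :
    (M *ᵥ x) i ^ 2 ≤ (∑ j, |M i j|) * ∑ j, |M i j| * x j ^ 2 :=
  sum_sq_le_sum_mul_sum_of_sq_le_mul _ (fun _ _ => abs_nonneg _)
    (fun _ _ => mul_nonneg (abs_nonneg _) (sq_nonneg _))
    (fun j _ => by rw [mul_pow, ← sq_abs (M i j), sq, mul_assoc])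

theorem sum_sq_mulVec_le_of_abs_sum_le [Fintype m] [CommRing R] [LinearOrder R]
    [IsStrictOrderedRing R] (M : Matrix m n R) {r c : R} (hr0 : 0 ≤ r)
    (hr : ∀ i, ∑ j, |M i j| ≤ r) (hc : ∀ j, ∑ i, |M i j| ≤ c) (x : n → R) :
    ∑ i, (M *ᵥ x) i ^ 2 ≤ r * c * ∑ j, x j ^ 2 :=
  calc ∑ i, (M *ᵥ x) i ^ 2 ≤ ∑ i, r * ∑ j, |M i j| * x j ^ 2 :=
        sum_le_sum fun i _ => (sq_mulVec_le M x i).trans <|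
          mul_le_mul_of_nonneg_right (hr i) (sum_nonneg fun _ _ => by positivity)
    _ = r * ∑ j, (∑ i, |M i j|) * x j ^ 2 := by
        rw [← mul_sum, sum_comm]; simp_rw [sum_mul]
    _ ≤ r * ∑ j, c * x j ^ 2 :=
        mul_le_mul_of_nonneg_left
          (sum_le_sum fun j _ => mul_le_mul_of_nonneg_right (hc j) (sq_nonneg _)) hr0
    _ = r * c * ∑ j, x j ^ 2 := by rw [← mul_sum, mul_assoc]

theorem matrixSpectralNorm_le_sqrt_of_abs_sum_le [Fintype m] [DecidableEq n] (M : Matrix m n ℝ)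
    {r c : ℝ} (hr : ∀ i, ∑ j, |M i j| ≤ r) (hc : ∀ j, ∑ i, |M i j| ≤ c) :
    matrixSpectralNorm M ≤ √(r * c) := by
  refine ContinuousLinearMap.opNorm_le_bound _ (Real.sqrt_nonneg _) fun x => ?_
  rcases isEmpty_or_nonempty m with _ | ⟨⟨i⟩⟩
  · rw [Subsingleton.elim (LinearMap.toContinuousLinearMap (toEuclideanLin M) x) 0, norm_zero]
    positivity
  have hr0 : 0 ≤ r := (sum_nonneg fun _ _ => abs_nonneg _).trans (hr i)
  rw [LinearMap.coe_toContinuousLinearMap', ← Real.sqrt_sq (norm_nonneg x), ← Real.sqrt_mul',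
    ← Real.sqrt_sq (norm_nonneg _)]
  · refine Real.sqrt_le_sqrt ?_
    simpa [EuclideanSpace.norm_sq_eq] using sum_sq_mulVec_le_of_abs_sum_le M hr0 hr hc x
  · positivity

end Matrix

/-- If `A` is a real `n × n` matrix with `A i j * A j i = 0` for all `i, j`
(as is the case for any DAG adjacency matrix) and `B = A + Aᵀ`, then
`‖A‖₂ ≤ max_j ∑_i |B i j|`. -/
theorem spectralNorm_le_max_col_sum_symmetrization {n : ℕ} (hn : 0 < n)
    (A : Matrix (Fin n) (Fin n) ℝ) (hA : ∀ i j, A i j * A j i = 0) :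
    matrixSpectralNorm A ≤
      Finset.univ.sup' (Finset.univ_nonempty_iff.mpr (Fin.pos_iff_nonempty.mp hn))
        (fun j => ∑ i, |(A + Aᵀ) i j|) := by
  set C := Finset.univ.sup' (Finset.univ_nonempty_iff.mpr (Fin.pos_iff_nonempty.mp hn))
    (fun j => ∑ i, |(A + Aᵀ) i j|)
  have hB : ∀ j, ∑ i, |(A + Aᵀ) i j| ≤ C := fun j =>
    le_sup' (fun j => ∑ i, |(A + Aᵀ) i j|) (mem_univ j)
  have hC : 0 ≤ C := (sum_nonneg fun _ _ => abs_nonneg _).trans (hB ⟨0, hn⟩)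
  have hcol : ∀ j, ∑ i, |A i j| ≤ C := fun j =>
    (sum_le_sum fun i _ => abs_le_abs_add_of_mul_eq_zero (hA i j)).trans (hB j)
  have hrow : ∀ i, ∑ j, |A i j| ≤ C := fun i =>
    (sum_le_sum fun j _ => (abs_le_abs_add_of_mul_eq_zero (hA i j)).trans_eq
      (by rw [add_comm]; rfl)).trans (hB i)
  calc matrixSpectralNorm A ≤ √(C * C) := matrixSpectralNorm_le_sqrt_of_abs_sum_le A hrow hcol
    _ = C := Real.sqrt_mul_self hC
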